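/- arXiv:2507.01729 — 4 statements merged into one kernel-verified Lean document; each statement's English description precedes it below -/
import Mathlib

section
/- For every f ∈ H_k(Ω) and x ∈ Ω, the gradient interpolation error satisfies ‖∇f(x) − ∇(Π_{V(X_n)} f)(x)‖ ≤ ‖f‖_{H_k(Ω)} · sqrt( Σ_{‖a‖₁ = 1} (P^a_{X_n}(x))² ), where the sum ranges over all multi-indices a ∈ ℕ_0^N with ‖a‖₁ = 1. -/
open scoped RealInnerProductSpace

/-- gradient error bound via the Hermite Power functions. -/
theorem stmt5
    {N : ℕ} {H : Type*} [NormedAddCommGroup H] [InnerProductSpace ℝ H] [CompleteSpace H]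
    (Ω : Set (EuclideanSpace ℝ (Fin N))) (hΩ : Ω.Nonempty)
    (k : EuclideanSpace ℝ (Fin N) → EuclideanSpace ℝ (Fin N) → ℝ)
    (hk : ContDiff ℝ 2 (fun q : EuclideanSpace ℝ (Fin N) × EuclideanSpace ℝ (Fin N) => k q.1 q.2))
    (ev : H →ₗ[ℝ] (EuclideanSpace ℝ (Fin N) → ℝ))
    (K : EuclideanSpace ℝ (Fin N) → H)
    (DK : Fin N → EuclideanSpace ℝ (Fin N) → H)
    (hK : ∀ x, ev (K x) = k x)
    (hDK : ∀ l x, ev (DK l x) = fun y => fderiv ℝ (fun z => k z y) x (EuclideanSpace.single l 1))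
    (hrep : ∀ (x : EuclideanSpace ℝ (Fin N)) (f : H), ⟪K x, f⟫ = ev f x)
    (hrepD : ∀ (l : Fin N) (x : EuclideanSpace ℝ (Fin N)) (f : H),
      ⟪DK l x, f⟫ = fderiv ℝ (ev f) x (EuclideanSpace.single l 1))
    (X : Finset (EuclideanSpace ℝ (Fin N))) (hX : ↑X ⊆ Ω)
    (V : Submodule ℝ H)
    (hV : V = Submodule.span ℝ ((K '' ↑X) ∪ ⋃ l : Fin N, DK l '' ↑X))
    (P : H →ₗ[ℝ] H)
    (hPmem : ∀ f, P f ∈ V)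
    (hPorth : ∀ f, ∀ v ∈ V, ⟪f - P f, v⟫ = 0)
    (f : H) :
    ∀ x ∈ Ω,
      Real.sqrt (∑ l : Fin N,
          (fderiv ℝ (ev f) x (EuclideanSpace.single l 1)
            - fderiv ℝ (ev (P f)) x (EuclideanSpace.single l 1)) ^ 2)
        ≤ ‖f‖ * Real.sqrt (∑ l : Fin N, ‖DK l x - P (DK l x)‖ ^ 2) := by
  intro x _
  -- norm of f - P f is at most norm of f
  have hfP : ‖f - P f‖ ≤ ‖f‖ := by
    have h0 : ⟪f - P f, P f⟫ = 0 := hPorth f _ (hPmem f)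
    have hsq : ‖f‖ ^ 2 = ‖f - P f‖ ^ 2 + ‖P f‖ ^ 2 := by
      have := norm_add_sq_real (f - P f) (P f)
      simpa [h0] using this
    nlinarith [norm_nonneg (f - P f), norm_nonneg (P f), norm_nonneg f]
  have hd : ∀ l : Fin N,
      fderiv ℝ (ev f) x (EuclideanSpace.single l 1)
        - fderiv ℝ (ev (P f)) x (EuclideanSpace.single l 1)
      = ⟪DK l x - P (DK l x), f - P f⟫ := by
    intro l
    have h1 : (⟪P (DK l x), f - P f⟫ : ℝ) = 0 := by
      rw [real_inner_comm]
      exact hPorth f _ (hPmem (DK l x))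
    have h2 : (⟪DK l x - P (DK l x), f - P f⟫ : ℝ) = ⟪DK l x, f - P f⟫ := by
      rw [inner_sub_left, h1, sub_zero]
    rw [h2, inner_sub_right, hrepD, hrepD]
  have hterm : ∀ l : Fin N,
      (fderiv ℝ (ev f) x (EuclideanSpace.single l 1)
        - fderiv ℝ (ev (P f)) x (EuclideanSpace.single l 1)) ^ 2
      ≤ ‖f‖ ^ 2 * ‖DK l x - P (DK l x)‖ ^ 2 := by
    intro l
    rw [hd l]
    have hcs := abs_real_inner_le_norm (DK l x - P (DK l x)) (f - P f)
    have h1 : |(⟪DK l x - P (DK l x), f - P f⟫ : ℝ)| ≤ ‖DK l x - P (DK l x)‖ * ‖f‖ := by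
      calc |(⟪DK l x - P (DK l x), f - P f⟫ : ℝ)|
          ≤ ‖DK l x - P (DK l x)‖ * ‖f - P f‖ := hcs
        _ ≤ ‖DK l x - P (DK l x)‖ * ‖f‖ :=
            mul_le_mul_of_nonneg_left hfP (norm_nonneg _)
    calc (⟪DK l x - P (DK l x), f - P f⟫ : ℝ) ^ 2
        = |(⟪DK l x - P (DK l x), f - P f⟫ : ℝ)| ^ 2 := (sq_abs _).symm
      _ ≤ (‖DK l x - P (DK l x)‖ * ‖f‖) ^ 2 := by
          apply pow_le_pow_left₀ (abs_nonneg _) h1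
      _ = ‖f‖ ^ 2 * ‖DK l x - P (DK l x)‖ ^ 2 := by ring
  have hsum : (∑ l : Fin N,
      (fderiv ℝ (ev f) x (EuclideanSpace.single l 1)
        - fderiv ℝ (ev (P f)) x (EuclideanSpace.single l 1)) ^ 2)
      ≤ ‖f‖ ^ 2 * ∑ l : Fin N, ‖DK l x - P (DK l x)‖ ^ 2 := by
    rw [Finset.mul_sum]
    exact Finset.sum_le_sum fun l _ => hterm l
  calc Real.sqrt (∑ l : Fin N,
          (fderiv ℝ (ev f) x (EuclideanSpace.single l 1)
            - fderiv ℝ (ev (P f)) x (EuclideanSpace.single l 1)) ^ 2)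
      ≤ Real.sqrt (‖f‖ ^ 2 * ∑ l : Fin N, ‖DK l x - P (DK l x)‖ ^ 2) :=
        Real.sqrt_le_sqrt hsum
    _ = ‖f‖ * Real.sqrt (∑ l : Fin N, ‖DK l x - P (DK l x)‖ ^ 2) := by
        rw [Real.sqrt_mul (sq_nonneg _), Real.sqrt_sq (norm_nonneg f)]
end

section
/- Suppose k(x,·) is uniformly Lipschitz continuous with constant C_k, i.e., |k(x,x̃) − k(x,x')| ≤ C_k ‖x̃ − x'‖ for all x, x̃, x' ∈ Ω. Then the Power function P_{X_n}(x) = ‖(I − Π_{V(X_n)}) k(x,·)‖_{H_k(Ω)} is Hölder continuous with exponent 1/2: |P_{X_n}(x) − P_{X_n}(y)| ≤ 4 √C_k · ‖x − y‖^{1/2} for all x, y ∈ Ω. -/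
open scoped RealInnerProductSpace

/-- Hölder continuity (exponent 1/2) of the Power function. -/
theorem stmt6
    {N : ℕ} {H : Type*} [NormedAddCommGroup H] [InnerProductSpace ℝ H] [CompleteSpace H]
    (Ω : Set (EuclideanSpace ℝ (Fin N))) (hΩ : Ω.Nonempty)
    (k : EuclideanSpace ℝ (Fin N) → EuclideanSpace ℝ (Fin N) → ℝ)
    (hk : ContDiff ℝ 2 (fun q : EuclideanSpace ℝ (Fin N) × EuclideanSpace ℝ (Fin N) => k q.1 q.2))
    (hsymm : ∀ x y, k x y = k y x)
    (Ck : ℝ)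
    (hLip : ∀ x ∈ Ω, ∀ xt ∈ Ω, ∀ x' ∈ Ω, |k x xt - k x x'| ≤ Ck * ‖xt - x'‖)
    (ev : H →ₗ[ℝ] (EuclideanSpace ℝ (Fin N) → ℝ))
    (K : EuclideanSpace ℝ (Fin N) → H)
    (DK : Fin N → EuclideanSpace ℝ (Fin N) → H)
    (hK : ∀ x, ev (K x) = k x)
    (hDK : ∀ l x, ev (DK l x) = fun y => fderiv ℝ (fun z => k z y) x (EuclideanSpace.single l 1))
    (hrep : ∀ (x : EuclideanSpace ℝ (Fin N)) (f : H), ⟪K x, f⟫ = ev f x)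
    (X : Finset (EuclideanSpace ℝ (Fin N))) (hX : ↑X ⊆ Ω)
    (V : Submodule ℝ H)
    (hV : V = Submodule.span ℝ ((K '' ↑X) ∪ ⋃ l : Fin N, DK l '' ↑X))
    (P : H →ₗ[ℝ] H)
    (hPmem : ∀ f, P f ∈ V)
    (hPorth : ∀ f, ∀ v ∈ V, ⟪f - P f, v⟫ = 0) :
    ∀ x ∈ Ω, ∀ y ∈ Ω,
      |‖K x - P (K x)‖ - ‖K y - P (K y)‖|
        ≤ 4 * Real.sqrt Ck * ‖x - y‖ ^ ((1 : ℝ) / 2) := by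
  intro x hx y hy
  -- contraction property of I - P
  have hcontr : ∀ f : H, ‖f - P f‖ ≤ ‖f‖ := by
    intro f
    have h0 : ⟪f - P f, P f⟫ = 0 := hPorth f (P f) (hPmem f)
    have hsq : ‖f‖ ^ 2 = ‖f - P f‖ ^ 2 + ‖P f‖ ^ 2 := by
      have : f = (f - P f) + P f := by abel
      calc ‖f‖ ^ 2 = ‖(f - P f) + P f‖ ^ 2 := by rw [← this]
        _ = ‖f - P f‖ ^ 2 + 2 * ⟪f - P f, P f⟫ + ‖P f‖ ^ 2 :=
          norm_add_sq_real _ _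
        _ = ‖f - P f‖ ^ 2 + ‖P f‖ ^ 2 := by rw [h0]; ring
    nlinarith [norm_nonneg f, norm_nonneg (f - P f), sq_nonneg ‖P f‖]
  have step1 : |‖K x - P (K x)‖ - ‖K y - P (K y)‖| ≤ ‖K x - K y‖ := by
    calc |‖K x - P (K x)‖ - ‖K y - P (K y)‖|
        ≤ ‖(K x - P (K x)) - (K y - P (K y))‖ := abs_norm_sub_norm_le _ _
      _ = ‖(K x - K y) - P (K x - K y)‖ := by rw [map_sub]; congr 1; abel
      _ ≤ ‖K x - K y‖ := hcontr _
  by_cases hxy : x = y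
  · subst hxy
    simp only [sub_self, norm_zero]
    have : (0:ℝ) ^ ((1:ℝ)/2) = 0 := by
      rw [Real.zero_rpow]; norm_num
    rw [this, mul_zero, abs_of_nonneg (le_refl (0:ℝ))]
  · have hd : 0 < ‖x - y‖ := by
      simpa [sub_eq_zero] using (norm_pos_iff.mpr (sub_ne_zero.mpr hxy))
    have hCk : 0 ≤ Ck := by
      have h := hLip x hx x hx y hy
      nlinarith [abs_nonneg (k x x - k x y)]
    -- norm bound
    have hkxy : ‖K x - K y‖ ^ 2 ≤ 2 * Ck * ‖x - y‖ := by
      have hinner : ‖K x - K y‖ ^ 2 = (k x x - k x y) + (k y y - k y x) := by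
        have e1 : ⟪K x, K x - K y⟫ = k x x - k x y := by
          rw [hrep]; simp [map_sub, hK, hsymm y x]
        have e2 : ⟪K y, K x - K y⟫ = k x y - k y y := by
          rw [hrep]; simp [map_sub, hK, hsymm y x]
        calc ‖K x - K y‖ ^ 2 = ⟪K x - K y, K x - K y⟫ := by
              rw [real_inner_self_eq_norm_sq]
          _ = ⟪K x, K x - K y⟫ - ⟪K y, K x - K y⟫ := by
              rw [inner_sub_left]
          _ = (k x x - k x y) + (k y y - k y x) := by
              rw [e1, e2, hsymm y x]; ring
      have h1 : |k x x - k x y| ≤ Ck * ‖x - y‖ := hLip x hx x hx y hy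
      have h2 : |k y y - k y x| ≤ Ck * ‖x - y‖ := by
        have := hLip y hy y hy x hx
        simpa [norm_sub_rev x y] using this
      rw [hinner]
      calc (k x x - k x y) + (k y y - k y x)
          ≤ |k x x - k x y| + |k y y - k y x| :=
            add_le_add (le_abs_self _) (le_abs_self _)
        _ ≤ Ck * ‖x - y‖ + Ck * ‖x - y‖ := add_le_add h1 h2
        _ = 2 * Ck * ‖x - y‖ := by ring
    have hnorm : ‖K x - K y‖ ≤ Real.sqrt (2 * Ck * ‖x - y‖) := by
      rw [show (2 * Ck * ‖x - y‖) = (2*Ck*‖x-y‖) from rfl]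
      have := Real.sqrt_le_sqrt hkxy
      rwa [Real.sqrt_sq (norm_nonneg _)] at this
    have hsqrt : Real.sqrt (2 * Ck * ‖x - y‖)
        ≤ 4 * Real.sqrt Ck * ‖x - y‖ ^ ((1:ℝ)/2) := by
      rw [Real.sqrt_mul (by positivity : (0:ℝ) ≤ 2 * Ck),
          Real.sqrt_mul (by norm_num : (0:ℝ) ≤ 2),
          ← Real.sqrt_eq_rpow]
      have h2 : Real.sqrt 2 ≤ 4 := by
        nlinarith [Real.sq_sqrt (by norm_num : (0:ℝ) ≤ 2),
          Real.sqrt_nonneg (2:ℝ)]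
      have hnn : 0 ≤ Real.sqrt Ck * Real.sqrt ‖x - y‖ := by positivity
      nlinarith
    calc |‖K x - P (K x)‖ - ‖K y - P (K y)‖| ≤ ‖K x - K y‖ := step1
      _ ≤ Real.sqrt (2 * Ck * ‖x - y‖) := hnorm
      _ ≤ 4 * Real.sqrt Ck * ‖x - y‖ ^ ((1:ℝ)/2) := hsqrt
end

section
/- (Sufficient decrease bound at the approximated generalized Cauchy point.) Under the assumptions that c^{(i)} is Hölder continuous with exponent 1/2 and constant C_c^{(i)} > 0, ∇Ĵ^{(i)} is Lipschitz with constant C_{∇Ĵ}^{(i)} > 0, Ĵ^{(i)} is bounded below, Φ^{(i)} < π/2, κ_arm ∈ (0,1), κ_bt ∈ (0,1), and c^{(i)}(μ^{(i)}) > 0, the approximated generalized Cauchy point μ_AGC^{(i)} produced by Armijo backtracking along the descent direction satisfies Ĵ^{(i)}(μ^{(i)}) − Ĵ^{(i)}(μ_AGC^{(i)}) ≥ κ_arm cos Φ^{(i)} · ‖∇Ĵ^{(i)}(μ^{(i)})‖ · min{ κ_{∇Ĵ}^{(i)} ‖∇Ĵ^{(i)}(μ^{(i)})‖, κ_bt (c^{(i)}(μ^{(i)}))²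 / (C_c^{(i)})² }, where κ_{∇Ĵ}^{(i)} = min{1, κ_bt(1 − κ_arm) cos Φ^{(i)} / C_{∇Ĵ}^{(i)}}. -/
set_option maxHeartbeats 1000000


open scoped RealInnerProductSpace

lemma fderiv_eq_inner_gradient {p : ℕ} (f : EuclideanSpace ℝ (Fin p) → ℝ)
    (y u : EuclideanSpace ℝ (Fin p)) :
    fderiv ℝ f y u = ⟪gradient f y, u⟫ := by
  have h : (InnerProductSpace.toDual ℝ (EuclideanSpace ℝ (Fin p))) (gradient f y)
      = fderiv ℝ f y := (InnerProductSpace.toDual ℝ _).apply_symm_apply _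
  rw [← h, InnerProductSpace.toDual_apply_apply]

/-- Descent lemma: Lipschitz gradient gives a quadratic upper bound. -/
lemma descent_aux {p : ℕ} (f : EuclideanSpace ℝ (Fin p) → ℝ) (L : ℝ)
    (hdiff : Differentiable ℝ f)
    (hLip : ∀ μ ν, ‖gradient f μ - gradient f ν‖ ≤ L * ‖μ - ν‖)
    (x v : EuclideanSpace ℝ (Fin p)) :
    f (x + v) ≤ f x + ⟪gradient f x, v⟫ + L / 2 * ‖v‖ ^ 2 := by
  set g : ℝ → ℝ := fun t => f (x + t • v) - t * ⟪gradient f x, v⟫ - L / 2 * ‖v‖ ^ 2 * t ^ 2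
    with hg
  have curve : ∀ t : ℝ, HasDerivAt (fun s : ℝ => x + s • v) v t := by
    intro t
    have h1 : HasDerivAt (fun s : ℝ => s • v) ((1 : ℝ) • v) t :=
      (hasDerivAt_id t).smul_const v
    simpa using h1.const_add x
  have hgd : ∀ t : ℝ, HasDerivAt g
      (⟪gradient f (x + t • v), v⟫ - ⟪gradient f x, v⟫ - L * ‖v‖ ^ 2 * t) t := by
    intro t
    have h1 : HasDerivAt (fun s : ℝ => f (x + s • v)) (fderiv ℝ f (x + t • v) v) t :=
      (hdiff (x + t • v)).hasFDerivAt.comp_hasDerivAt t (curve t)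
    rw [fderiv_eq_inner_gradient] at h1
    have h2 : HasDerivAt (fun s : ℝ => s * ⟪gradient f x, v⟫) ⟪gradient f x, v⟫ t := by
      simpa using (hasDerivAt_id t).mul_const ⟪gradient f x, v⟫
    have h3 : HasDerivAt (fun s : ℝ => L / 2 * ‖v‖ ^ 2 * s ^ 2)
        (L / 2 * ‖v‖ ^ 2 * (2 * t)) t := by
      simpa [mul_comm] using (hasDerivAt_pow 2 t).const_mul (L / 2 * ‖v‖ ^ 2)
    have : HasDerivAt g (⟪gradient f (x + t • v), v⟫ - ⟪gradient f x, v⟫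
        - L / 2 * ‖v‖ ^ 2 * (2 * t)) t := (h1.sub h2).sub h3
    convert this using 1
    ring
  have hanti : AntitoneOn g (Set.Icc (0 : ℝ) 1) := by
    apply antitoneOn_of_deriv_nonpos (convex_Icc 0 1)
    · exact fun t _ => (hgd t).continuousAt.continuousWithinAt
    · exact fun t _ => (hgd t).differentiableAt.differentiableWithinAt
    · intro t ht
      rw [interior_Icc] at ht
      rw [(hgd t).deriv]
      have h1 : ⟪gradient f (x + t • v), v⟫ - ⟪gradient f x, v⟫
          = ⟪gradient f (x + t • v) - gradient f x, v⟫ := by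
        rw [inner_sub_left]
      have h2 : ⟪gradient f (x + t • v) - gradient f x, v⟫
          ≤ ‖gradient f (x + t • v) - gradient f x‖ * ‖v‖ :=
        real_inner_le_norm _ _
      have h3 : ‖gradient f (x + t • v) - gradient f x‖ ≤ L * ‖t • v‖ := by
        have := hLip (x + t • v) x
        simpa using this
      have h4 : ‖t • v‖ = t * ‖v‖ := by
        rw [norm_smul, Real.norm_eq_abs, abs_of_pos ht.1]
      have h5 := mul_le_mul_of_nonneg_right h3 (norm_nonneg v)
      rw [h4] at h5
      have hv2 : ‖v‖ ^ 2 = ‖v‖ * ‖v‖ := sq ‖v‖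
      nlinarith [h1, h2, h5]
  have hmono := hanti (Set.left_mem_Icc.2 zero_le_one) (Set.right_mem_Icc.2 zero_le_one)
    zero_le_one
  simp only [hg, zero_smul, add_zero, zero_mul, sub_zero, one_smul, one_mul, one_pow,
    mul_one] at hmono
  linarith

/-- sufficient decrease bound at the approximated generalized Cauchy
(AGC) point produced by Armijo backtracking. -/
theorem stmt16
    {p : ℕ} (f c : EuclideanSpace ℝ (Fin p) → ℝ)
    (Cc Cg Φ κarm κbt : ℝ) (μ0 pdir : EuclideanSpace ℝ (Fin p))
    (hdiff : Differentiable ℝ f)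
    (hCc : 0 < Cc)
    (hHol : ∀ μ ν : EuclideanSpace ℝ (Fin p), |c μ - c ν| ≤ Cc * ‖μ - ν‖ ^ ((1 : ℝ) / 2))
    (hCg : 0 < Cg)
    (hLip : ∀ μ ν, ‖gradient f μ - gradient f ν‖ ≤ Cg * ‖μ - ν‖)
    (hbb : BddBelow (Set.range f))
    (hΦ0 : 0 ≤ Φ) (hΦ : Φ < Real.pi / 2)
    (hκarm : 0 < κarm) (hκarm1 : κarm < 1)
    (hκbt : 0 < κbt) (hκbt1 : κbt < 1)
    (hc0 : 0 < c μ0)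
    (hdesc : ⟪gradient f μ0, pdir⟫ = -(‖gradient f μ0‖ * ‖pdir‖ * Real.cos Φ))
    (hpnorm : ‖pdir‖ = ‖gradient f μ0‖)
    (Good : ℕ → Prop)
    (hGoodDef : ∀ j : ℕ, Good j ↔
      (f (μ0 + κbt ^ j • pdir) - f μ0
          ≤ -(κarm * ‖gradient f μ0‖ * ‖μ0 - (μ0 + κbt ^ j • pdir)‖ * Real.cos Φ) ∧
        0 ≤ c (μ0 + κbt ^ j • pdir)))
    (jA : ℕ) (hjA : Good jA) (hjAmin : ∀ j < jA, ¬ Good j) :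
    κarm * Real.cos Φ * ‖gradient f μ0‖ *
        min ((min 1 (κbt * (1 - κarm) * Real.cos Φ / Cg)) * ‖gradient f μ0‖)
          (κbt * (c μ0) ^ 2 / Cc ^ 2)
      ≤ f μ0 - f (μ0 + κbt ^ jA • pdir) := by
  have hcos : 0 < Real.cos Φ := by
    apply Real.cos_pos_of_mem_Ioo
    constructor
    · linarith [Real.pi_pos]
    · exact hΦ
  set G : ℝ := ‖gradient f μ0‖ with hG
  have hG0 : 0 ≤ G := norm_nonneg _
  -- norm of steps
  have hnorm : ∀ t : ℝ, 0 ≤ t → ‖μ0 - (μ0 + t • pdir)‖ = t * G := by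
    intro t ht
    have : μ0 - (μ0 + t • pdir) = -(t • pdir) := by abel
    rw [this, norm_neg, norm_smul, Real.norm_eq_abs, abs_of_nonneg ht, hpnorm]
  have htpos : ∀ j : ℕ, (0 : ℝ) < κbt ^ j := fun j => pow_pos hκbt j
  -- key: min ≤ κbt^jA * G
  have hmin : min ((min 1 (κbt * (1 - κarm) * Real.cos Φ / Cg)) * G)
      (κbt * (c μ0) ^ 2 / Cc ^ 2) ≤ κbt ^ jA * G := by
    rcases eq_or_lt_of_le hG0 with hGz | hGpos
    · calc min ((min 1 (κbt * (1 - κarm) * Real.cos Φ / Cg)) * G)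
            (κbt * (c μ0) ^ 2 / Cc ^ 2)
          ≤ (min 1 (κbt * (1 - κarm) * Real.cos Φ / Cg)) * G := min_le_left _ _
        _ = κbt ^ jA * G := by rw [← hGz]; ring
    · cases jA with
      | zero =>
        calc min ((min 1 (κbt * (1 - κarm) * Real.cos Φ / Cg)) * G)
              (κbt * (c μ0) ^ 2 / Cc ^ 2)
            ≤ (min 1 (κbt * (1 - κarm) * Real.cos Φ / Cg)) * G := min_le_left _ _
          _ ≤ 1 * G := mul_le_mul_of_nonneg_right (min_le_left _ _) hG0
          _ = κbt ^ 0 * G := by norm_num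
      | succ j =>
        have hbad := hjAmin j (Nat.lt_succ_self j)
        rw [hGoodDef, not_and_or] at hbad
        set s : ℝ := κbt ^ j with hs
        have hspos : 0 < s := htpos j
        rcases hbad with harm | hcon
        · -- Armijo failed at previous step
          push_neg at harm
          rw [hnorm s hspos.le] at harm
          have hdes := descent_aux f Cg hdiff hLip μ0 (s • pdir)
          have hin : ⟪gradient f μ0, s • pdir⟫ = s * (-(G * G * Real.cos Φ)) := by
            rw [real_inner_smul_right, hdesc, hpnorm]
          have hns : ‖s • pdir‖ ^ 2 = s ^ 2 * G ^ 2 := by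
            rw [norm_smul, Real.norm_eq_abs, abs_of_nonneg hspos.le, hpnorm, mul_pow]
          rw [hin, hns] at hdes
          -- (1 - κarm) * cosΦ * s * G^2 < Cg/2 * s^2 * G^2
          have hkey : (1 - κarm) * Real.cos Φ * s < Cg / 2 * s ^ 2 := by
            have hG2 : 0 < G ^ 2 := by positivity
            have h1 : (1 - κarm) * Real.cos Φ * s * G ^ 2 < Cg / 2 * s ^ 2 * G ^ 2 := by
              nlinarith [harm, hdes]
            exact lt_of_mul_lt_mul_right h1 hG2.le
          have h6 : (1 - κarm) * Real.cos Φ < Cg * s := by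
            have h7 : (1 - κarm) * Real.cos Φ * s < Cg * s * s := by nlinarith [hkey, hspos]
            exact lt_of_mul_lt_mul_right h7 hspos.le
          have hst : κbt * (1 - κarm) * Real.cos Φ / Cg ≤ κbt ^ (j + 1) := by
            rw [div_le_iff₀ hCg, pow_succ, ← hs]
            nlinarith [mul_le_mul_of_nonneg_left h6.le hκbt.le]
          calc min ((min 1 (κbt * (1 - κarm) * Real.cos Φ / Cg)) * G)
                (κbt * (c μ0) ^ 2 / Cc ^ 2)
              ≤ (min 1 (κbt * (1 - κarm) * Real.cos Φ / Cg)) * G := min_le_left _ _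
            _ ≤ (κbt * (1 - κarm) * Real.cos Φ / Cg) * G :=
                mul_le_mul_of_nonneg_right (min_le_right _ _) hG0
            _ ≤ κbt ^ (j + 1) * G := mul_le_mul_of_nonneg_right hst hG0
        · -- constraint failed at previous step
          push_neg at hcon
          have hhol := hHol μ0 (μ0 + s • pdir)
          rw [hnorm s hspos.le] at hhol
          have h1 : c μ0 ≤ Cc * (s * G) ^ ((1 : ℝ) / 2) := by
            have : c μ0 ≤ c μ0 - c (μ0 + s • pdir) := by linarith
            calc c μ0 ≤ c μ0 - c (μ0 + s • pdir) := this
              _ ≤ |c μ0 - c (μ0 + s • pdir)| := le_abs_self _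
              _ ≤ Cc * (s * G) ^ ((1 : ℝ) / 2) := hhol
          have hsG : 0 ≤ s * G := by positivity
          have h2 : (c μ0) ^ 2 ≤ Cc ^ 2 * (s * G) := by
            have hsq := pow_le_pow_left₀ hc0.le h1 2
            rw [mul_pow] at hsq
            have hrw : ((s * G) ^ ((1 : ℝ) / 2)) ^ 2 = s * G := by
              rw [← Real.rpow_natCast ((s * G) ^ ((1 : ℝ) / 2)) 2,
                ← Real.rpow_mul hsG]
              norm_num
            rwa [hrw] at hsq
          have h3 : κbt * (c μ0) ^ 2 / Cc ^ 2 ≤ κbt ^ (j + 1) * G := by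
            have hss : κbt ^ (j + 1) = s * κbt := by rw [pow_succ, hs]
            rw [div_le_iff₀ (by positivity : (0 : ℝ) < Cc ^ 2), hss]
            nlinarith [mul_le_mul_of_nonneg_left h2 hκbt.le]
          exact (min_le_right _ _).trans h3
  -- conclude using Good jA
  rw [hGoodDef] at hjA
  obtain ⟨hjA1, _⟩ := hjA
  rw [hnorm _ (htpos jA).le] at hjA1
  have hfin : κarm * Real.cos Φ * G * (κbt ^ jA * G)
      ≤ f μ0 - f (μ0 + κbt ^ jA • pdir) := by nlinarith
  calc κarm * Real.cos Φ * G *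
        min ((min 1 (κbt * (1 - κarm) * Real.cos Φ / Cg)) * G)
          (κbt * (c μ0) ^ 2 / Cc ^ 2)
      ≤ κarm * Real.cos Φ * G * (κbt ^ jA * G) :=
        mul_le_mul_of_nonneg_left hmin (by positivity)
    _ ≤ f μ0 - f (μ0 + κbt ^ jA • pdir) := hfin
end

section
/- (Convergence of the HKTR algorithm.) Let {μ^{(i)}} be a sequence with associated surrogates Ĵ^{(i)} satisfying Ĵ^{(i)}(μ^{(i)}) = J(μ^{(i)}), the sufficient decrease condition J(μ^{(i+1)}) ≤ Ĵ^{(i)}(μ_AGC^{(i)}) for all i, and the AGC decrease bound Ĵ^{(i)}(μ^{(i)}) − Ĵ^{(i)}(μ_AGC^{(i)}) ≥ κ_arm cos Φ ‖∇J(μ^{(i)})‖ min{κ_{∇Ĵ} ‖∇J(μ^{(i)})‖, κ_bt c_l²/C_c²} with uniform constants Φ < π/2, c_l > 0, C_c > 0, κ_{∇Ĵ} > 0, κ_arm, κ_bt ∈ (0,1). If J(μ^{(0)}) is finite and J is bounded below, then lim_{i→∞} ‖∇J(μ^{(i)})‖ = 0. -/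
open Filter

/-- convergence of the HKTR algorithm to a first-order critical point. -/
theorem stmt17
    {p : ℕ} (J : EuclideanSpace ℝ (Fin p) → ℝ)
    (μ : ℕ → EuclideanSpace ℝ (Fin p))
    (Jh : ℕ → EuclideanSpace ℝ (Fin p) → ℝ)
    (μA : ℕ → EuclideanSpace ℝ (Fin p))
    (Φ cl Cc κg κarm κbt : ℝ)
    (hdiff : Differentiable ℝ J)
    (hΦ0 : 0 ≤ Φ) (hΦ : Φ < Real.pi / 2)
    (hcl : 0 < cl) (hCc : 0 < Cc) (hκg : 0 < κg)
    (hκarm : 0 < κarm) (hκarm1 : κarm < 1)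
    (hκbt : 0 < κbt) (hκbt1 : κbt < 1)
    (hinterp : ∀ i, Jh i (μ i) = J (μ i))
    (hsuffdec : ∀ i, J (μ (i + 1)) ≤ Jh i (μA i))
    (hAGCdec : ∀ i,
      κarm * Real.cos Φ * ‖gradient J (μ i)‖ *
          min (κg * ‖gradient J (μ i)‖) (κbt * cl ^ 2 / Cc ^ 2)
        ≤ Jh i (μ i) - Jh i (μA i))
    (hbb : BddBelow (Set.range J)) :
    Tendsto (fun i => ‖gradient J (μ i)‖) atTop (nhds 0) := by
  set a : ℕ → ℝ := fun i => ‖gradient J (μ i)‖ with ha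
  set K : ℝ := κbt * cl ^ 2 / Cc ^ 2 with hK
  have hKpos : 0 < K := by positivity
  have hcos : 0 < Real.cos Φ :=
    Real.cos_pos_of_mem_Ioo ⟨by linarith [Real.pi_pos], hΦ⟩
  have hc : 0 < κarm * Real.cos Φ := by positivity
  set f : ℕ → ℝ := fun i => a i * min (κg * a i) K with hf
  have hfnn : ∀ i, 0 ≤ f i := fun i =>
    mul_nonneg (norm_nonneg _) (le_min (by positivity) hKpos.le)
  -- key decrease inequality
  have hkey : ∀ i, κarm * Real.cos Φ * f i ≤ J (μ i) - J (μ (i + 1)) := by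
    intro i
    have h1 := hAGCdec i
    have h2 := hsuffdec i
    have h3 := hinterp i
    simp only [hf, ha, hK] at *
    nlinarith [h1, h2, h3]
  have hanti : Antitone (fun i => J (μ i)) := by
    apply antitone_nat_of_succ_le
    intro i
    have := hkey i
    have := mul_nonneg hc.le (hfnn i)
    linarith
  have hbb' : BddBelow (Set.range fun i => J (μ i)) := by
    apply hbb.mono
    rintro x ⟨i, rfl⟩
    exact ⟨μ i, rfl⟩
  obtain ⟨L, hL⟩ : ∃ L, Tendsto (fun i => J (μ i)) atTop (nhds L) :=
    ⟨_, tendsto_atTop_ciInf hanti hbb'⟩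
  have hshift : Tendsto (fun i => J (μ (i + 1))) atTop (nhds L) :=
    hL.comp (tendsto_add_atTop_nat 1)
  have hdiff0 : Tendsto (fun i => J (μ i) - J (μ (i + 1))) atTop (nhds 0) := by
    have := hL.sub hshift
    simpa using this
  have hf0 : Tendsto f atTop (nhds 0) := by
    have hcf : Tendsto (fun i => κarm * Real.cos Φ * f i) atTop (nhds 0) :=
      squeeze_zero (fun i => mul_nonneg hc.le (hfnn i)) hkey hdiff0
    have h := hcf.const_mul (κarm * Real.cos Φ)⁻¹
    have heq : (fun i => (κarm * Real.cos Φ)⁻¹ * (κarm * Real.cos Φ * f i)) = f := by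
      funext i; field_simp
    rw [mul_zero] at h
    exact heq ▸ h
  -- conclude a → 0
  rw [Metric.tendsto_atTop]
  intro ε hε
  have hδ : 0 < ε * min (κg * ε) K := by positivity
  obtain ⟨N, hN⟩ := (Metric.tendsto_atTop.mp hf0) (ε * min (κg * ε) K) hδ
  refine ⟨N, fun n hn => ?_⟩
  have hfn := hN n hn
  rw [Real.dist_eq, sub_zero, abs_of_nonneg (hfnn n)] at hfn
  rw [Real.dist_eq, sub_zero, abs_of_nonneg (norm_nonneg _)]
  by_contra hcon
  push_neg at hcon
  have h1 : ε * min (κg * ε) K ≤ a n * min (κg * a n) K := by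
    apply mul_le_mul hcon (min_le_min (by nlinarith) le_rfl)
      (le_min (by positivity) hKpos.le) (norm_nonneg _)
  exact absurd hfn (not_lt.mpr h1)
end
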